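/- arXiv:2109.07433 — 3 statements merged into one kernel-verified Lean document; each statement's English description precedes it below -/
import Mathlib

section
/- With P_m and A_m defined as counting functions of lattice points (P_m(Z) = |{(s',Δ_1,…,Δ_m) ∈ ℕ^{m+1} : s' + Σ Δ_n 2^{n-1} ≤ Z}| and A_m(Y) = |{(Δ_1,…,Δ_m) ∈ ℕ^m : Σ Δ_n 2^{n-1} ≤ Y}|), it holds that 2 · P_m(Z) = A_{m+1}(2Z + 1) for all m ≥ 1 and Z ∈ ℕ. -/
/-- Number of tuples `(Δ_1,…,Δ_m) ∈ ℕ^m` with `Σ Δ_n 2^{n-1} ≤ Y`. -/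
noncomputable def A (m Y : ℕ) : ℕ :=
  Nat.card {f : Fin m → ℕ // ∑ n : Fin m, f n * 2 ^ (n : ℕ) ≤ Y}

/-- Number of tuples `(s',Δ_1,…,Δ_m) ∈ ℕ^{m+1}` with `s' + Σ Δ_n 2^{n-1} ≤ Z`. -/
noncomputable def P (m Z : ℕ) : ℕ :=
  Nat.card {p : ℕ × (Fin m → ℕ) // p.1 + ∑ n : Fin m, p.2 n * 2 ^ (n : ℕ) ≤ Z}

/-!
Write the first coordinate of a tuple counted by `A (m + 1) (2 * Z + 1)` as `2 * s' + b` with a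
parity bit `b`. The binary weights of the remaining coordinates are all even, so
`2 * s' + b + 2 * Σ Δ_n 2^{n-1} ≤ 2 * Z + 1` holds exactly when `s' + Σ Δ_n 2^{n-1} ≤ Z`,
whatever `b` is; hence these tuples are in bijection with two copies of those counted by `P m Z`.
-/

lemma sum_fin_succ_mul_two_pow {m : ℕ} (f : Fin (m + 1) → ℕ) :
    ∑ n : Fin (m + 1), f n * 2 ^ (n : ℕ) = f 0 + 2 * ∑ n : Fin m, f n.succ * 2 ^ (n : ℕ) := by
  simp only [Fin.sum_univ_succ, Fin.val_zero, pow_zero, mul_one, Fin.val_succ, pow_succ,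
    Finset.mul_sum]
  congr 1
  exact Finset.sum_congr rfl fun _ _ ↦ by ring

lemma Nat.bit_add_two_mul_le_two_mul_add_one_iff (b : Bool) (s t Z : ℕ) :
    Nat.bit b s + 2 * t ≤ 2 * Z + 1 ↔ s + t ≤ Z := by
  cases b <;> simp only [Nat.bit_false, Nat.bit_true] <;> omega

/-- `(b, s, d) ↦ (2 * s + b, d)`. -/
def bitConsEquiv (m : ℕ) : Bool × ℕ × (Fin m → ℕ) ≃ (Fin (m + 1) → ℕ) :=
  (Equiv.prodAssoc Bool ℕ (Fin m → ℕ)).symm.trans <|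
    (Equiv.prodCongr Equiv.boolProdNatEquivNat (Equiv.refl _)).trans (Fin.consEquiv fun _ ↦ ℕ)

lemma sum_bitConsEquiv_mul_two_pow {m : ℕ} (x : Bool × ℕ × (Fin m → ℕ)) :
    ∑ n : Fin (m + 1), bitConsEquiv m x n * 2 ^ (n : ℕ)
      = Nat.bit x.1 x.2.1 + 2 * ∑ n : Fin m, x.2.2 n * 2 ^ (n : ℕ) := by
  rw [sum_fin_succ_mul_two_pow]
  rfl

lemma Nat.card_subtype_bool_prod {α : Type*} (p : α → Prop) :
    Nat.card {x : Bool × α // p x.2} = 2 * Nat.card {a // p a} := by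
  let e : {x : Bool × α // p x.2} ≃ {a // p a} × Bool :=
    ((Equiv.prodComm Bool α).subtypeEquiv (q := fun y ↦ p y.1) fun _ ↦ Iff.rfl).trans
      Equiv.prodSubtypeFstEquivSubtypeProd
  rw [Nat.card_congr e, Nat.card_prod, Nat.card_eq_fintype_card (α := Bool), Fintype.card_bool,
    mul_comm]

def bitConsEquivSubtype (m Z : ℕ) :
    {x : Bool × ℕ × (Fin m → ℕ) // x.2.1 + ∑ n : Fin m, x.2.2 n * 2 ^ (n : ℕ) ≤ Z}
      ≃ {f : Fin (m + 1) → ℕ // ∑ n : Fin (m + 1), f n * 2 ^ (n : ℕ) ≤ 2 * Z + 1} :=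
  (bitConsEquiv m).subtypeEquiv fun x ↦ by
    rw [sum_bitConsEquiv_mul_two_pow, Nat.bit_add_two_mul_le_two_mul_add_one_iff]

theorem stmt3_general (m Z : ℕ) :
    2 * P m Z = A (m + 1) (2 * Z + 1) := by
  rw [P, A, ← Nat.card_congr (bitConsEquivSubtype m Z)]
  exact (Nat.card_subtype_bool_prod _).symm

theorem stmt3 (m Z : ℕ) (hm : 1 ≤ m) :
    2 * P m Z = A (m + 1) (2 * Z + 1) :=
  stmt3_general m Z
end

section
/- Let a be a unimodular complex sequence of length L (|a_i| = 1 for all i) that is a complementary sequence, i.e., there exists a sequence b with |b_i| ≤ 1 such that ρ_a(k) + ρ_b(k) = 0 for all k ≠ 0. Then for all z on the unit circle, |A(z)|² ≤ 2L, where A(z) = Σ_{i=0}^{L-1} a_i z^i; consequently the PMEPR of a, defined as max_{|z|=1} |A(z)|² / ρ_a(0), is at most 2. -/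
/-!
On the unit circle `conj (A z) * A z` expands as `ρ_a(0) + 2 Re Σ_{k ≥ 1} ρ_a(k) z^k`. For a
complementary pair the off-peak terms of `a` and `b` cancel, so `|A z|² + |B z|² = ρ_a(0) + ρ_b(0)`,
which is at most `2L` since `a` is unimodular and `|b_i| ≤ 1`.
-/

open Finset ComplexConjugate

/-- Aperiodic autocorrelation of a length-`L` complex sequence `a` at shift `k ≥ 0`. -/
noncomputable def aacf (L : ℕ) (a : ℕ → ℂ) (k : ℕ) : ℂ :=
  ∑ i ∈ Finset.range (L - k), (starRingEnd ℂ) (a i) * a (i + k)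

/-- Polynomial `A(z) = Σ_{i<L} a_i z^i` associated with a sequence. -/
noncomputable def seqPoly (L : ℕ) (a : ℕ → ℂ) (z : ℂ) : ℂ :=
  ∑ i ∈ Finset.range L, a i * z ^ i

namespace Finset

variable {M : Type*} [AddCommMonoid M]

lemma sum_Ico_sum_range_sub_eq (f : ℕ → ℕ → M) (m L : ℕ) :
    ∑ k ∈ Ico m L, ∑ i ∈ range (L - k), f i (i + k) =
      ∑ i ∈ range L, ∑ j ∈ Ico (i + m) L, f i j := by
  rw [sum_comm' (t' := range L) (s' := fun i => Ico m (L - i))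
    (fun k i => by simp only [mem_Ico, mem_range]; omega)]
  refine sum_congr rfl fun i hi => ?_
  simp_rw [add_comm i]
  rw [sum_Ico_add' (fun j => f i j), add_comm m, Nat.sub_add_cancel (mem_range.mp hi).le]

lemma sum_range_sum_range_lt (f : ℕ → ℕ → M) (L : ℕ) :
    ∑ i ∈ range L, ∑ j ∈ range i, f i j = ∑ j ∈ range L, ∑ i ∈ Ico (j + 1) L, f i j :=
  sum_comm' fun i j => by simp only [mem_Ico, mem_range]; omega

lemma sum_range_sum_range_eq_diag_add (f : ℕ → ℕ → M) (L : ℕ) :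
    ∑ i ∈ range L, ∑ j ∈ range L, f i j =
      ∑ i ∈ range L, f i i + ∑ i ∈ range L, ∑ j ∈ Ico (i + 1) L, f i j +
        ∑ i ∈ range L, ∑ j ∈ range i, f i j := by
  rw [← sum_add_distrib, ← sum_add_distrib]
  refine sum_congr rfl fun i hi => ?_
  rw [← sum_range_add_sum_Ico _ (mem_range.mp hi).le, sum_eq_sum_Ico_succ_bot (mem_range.mp hi)]
  abel

end Finset

lemma conj_sum_mul_sum_eq_aacf (L : ℕ) (x : ℕ → ℂ) :
    conj (∑ i ∈ range L, x i) * ∑ i ∈ range L, x i =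
      aacf L x 0 + ∑ k ∈ Ico 1 L, aacf L x k + conj (∑ k ∈ Ico 1 L, aacf L x k) := by
  have hdiag : aacf L x 0 = ∑ i ∈ range L, conj (x i) * x i := rfl
  have hupper : ∑ k ∈ Ico 1 L, aacf L x k =
      ∑ i ∈ range L, ∑ j ∈ Ico (i + 1) L, conj (x i) * x j :=
    sum_Ico_sum_range_sub_eq (fun i j => conj (x i) * x j) 1 L
  rw [map_sum, sum_mul_sum, sum_range_sum_range_eq_diag_add, sum_range_sum_range_lt, hdiag, hupper]
  simp only [map_sum, map_mul, Complex.conj_conj, mul_comm]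

lemma norm_sq_sum_eq_aacf (L : ℕ) (x : ℕ → ℂ) :
    ‖∑ i ∈ range L, x i‖ ^ 2 = (aacf L x 0).re + 2 * (∑ k ∈ Ico 1 L, aacf L x k).re := by
  have := congrArg Complex.re (conj_sum_mul_sum_eq_aacf L x)
  rw [Complex.conj_mul'] at this
  norm_cast at this
  simp only [Complex.add_re, Complex.conj_re] at this
  linarith

lemma aacf_mul_pow (L : ℕ) (a : ℕ → ℂ) {z : ℂ} (hz : ‖z‖ = 1) (k : ℕ) :
    aacf L (fun i => a i * z ^ i) k = aacf L a k * z ^ k := by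
  have hz' : conj z * z = 1 := by rw [Complex.conj_mul', hz]; norm_num
  rw [aacf, aacf, sum_mul]
  refine sum_congr rfl fun i _ => ?_
  calc conj (a i * z ^ i) * (a (i + k) * z ^ (i + k))
      = conj (a i) * a (i + k) * ((conj z * z) ^ i * z ^ k) := by simp only [map_mul, map_pow]; ring
    _ = conj (a i) * a (i + k) * z ^ k := by rw [hz', one_pow, one_mul]

lemma norm_sq_seqPoly_eq (L : ℕ) (a : ℕ → ℂ) {z : ℂ} (hz : ‖z‖ = 1) :
    ‖seqPoly L a z‖ ^ 2 =
      (aacf L a 0).re + 2 * (∑ k ∈ Ico 1 L, aacf L a k * z ^ k).re := by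
  simp only [seqPoly, norm_sq_sum_eq_aacf, aacf_mul_pow L a hz, pow_zero, mul_one]

lemma norm_sq_seqPoly_add_of_complementary (L : ℕ) (a b : ℕ → ℂ)
    (hab : ∀ k : ℕ, k ≠ 0 → aacf L a k + aacf L b k = 0) {z : ℂ} (hz : ‖z‖ = 1) :
    ‖seqPoly L a z‖ ^ 2 + ‖seqPoly L b z‖ ^ 2 = (aacf L a 0).re + (aacf L b 0).re := by
  have hsum : ∑ k ∈ Ico 1 L, aacf L a k * z ^ k + ∑ k ∈ Ico 1 L, aacf L b k * z ^ k = 0 := by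
    rw [← sum_add_distrib]
    refine sum_eq_zero fun k hk => ?_
    rw [← add_mul, hab k (by simp at hk; omega), zero_mul]
  have := congrArg Complex.re hsum
  rw [Complex.add_re, Complex.zero_re] at this
  rw [norm_sq_seqPoly_eq L a hz, norm_sq_seqPoly_eq L b hz]
  linarith

lemma aacf_zero_re (L : ℕ) (a : ℕ → ℂ) : (aacf L a 0).re = ∑ i ∈ range L, ‖a i‖ ^ 2 := by
  simp only [aacf, Nat.sub_zero, add_zero, Complex.re_sum, Complex.conj_mul', ← Complex.ofReal_pow,
    Complex.ofReal_re]

theorem stmt8_general (L : ℕ) (a b : ℕ → ℂ)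
    (ha : ∀ i < L, ‖a i‖ = 1)
    (hb : ∀ i < L, ‖b i‖ ≤ 1)
    (hGolay : ∀ k : ℕ, k ≠ 0 → aacf L a k + aacf L b k = 0) :
    ∀ z : ℂ, ‖z‖ = 1 →
      ‖seqPoly L a z‖ ^ 2 ≤ 2 * L ∧
      ‖seqPoly L a z‖ ^ 2 / (aacf L a 0).re ≤ 2 := by
  intro z hz
  have ha0 : (aacf L a 0).re = L := by
    rw [aacf_zero_re, sum_congr rfl fun i hi => by rw [ha i (mem_range.mp hi), one_pow]]
    simp
  have hb0 : (aacf L b 0).re ≤ L := by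
    rw [aacf_zero_re]
    calc ∑ i ∈ range L, ‖b i‖ ^ 2 ≤ ∑ i ∈ range L, 1 := by
          gcongr with i hi
          exact pow_le_one₀ (norm_nonneg _) (hb i (mem_range.mp hi))
      _ = L := by simp
  have hpair := norm_sq_seqPoly_add_of_complementary L a b hGolay hz
  have hA : ‖seqPoly L a z‖ ^ 2 ≤ 2 * L := by linarith [sq_nonneg ‖seqPoly L b z‖]
  refine ⟨hA, ?_⟩
  rw [ha0]
  exact div_le_of_le_mul₀ (Nat.cast_nonneg L) zero_le_two (by linarith)

theorem stmt8 (L : ℕ) (hL : 1 ≤ L) (a b : ℕ → ℂ)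
    (ha : ∀ i < L, ‖a i‖ = 1)
    (hb : ∀ i < L, ‖b i‖ ≤ 1)
    (hGolay : ∀ k : ℕ, k ≠ 0 → aacf L a k + aacf L b k = 0) :
    ∀ z : ℂ, ‖z‖ = 1 →
      ‖seqPoly L a z‖ ^ 2 ≤ 2 * L ∧
      ‖seqPoly L a z‖ ^ 2 / (aacf L a 0).re ≤ 2 :=
  stmt8_general L a b ha hb hGolay
end

section
/- Let m ≥ 1 and suppose non-negative integers d_1, …, d_m satisfy d_ℓ ≥ Σ_{i=ℓ+1}^m d_i for 1 ≤ ℓ ≤ m−1. Define f_s: ℤ_2^m → ℕ by f_s(x) = Σ_{n=1}^m d_n x_n. Then the map i ↦ i + f̌_s(i) from {0, 1, …, 2^m − 1} to ℕ is strictly increasing (hence injective), where f̌_s(i) = f_s(x) with x the binary expansion of i (x_1 the most significant bit). -/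
/-!
Peel off the most significant bit. Inside a block of `2 ^ (m + 1)` consecutive integers, two
indices with the same leading bit are compared by induction, with the weights `d 1, …, d m`.
When the leading bit goes from `0` to `1`, the term `d 0` gained is at least everything the
remaining bits can lose, namely `∑_{n > 0} d n`, so the shifted index still increases.
-/

open Finset

/-- The weighted digit sum `f̌_s(i)`: bit `n` counts from the most significant one. -/
def weightedBitSum {m : ℕ} (d : Fin m → ℕ) (i : ℕ) : ℕ :=
  ∑ n : Fin m, d n * (i / 2 ^ (m - 1 - (n : ℕ)) % 2)

def NonSquashing {m : ℕ} (d : Fin m → ℕ) : Prop :=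
  ∀ ℓ : Fin m, ∑ n ∈ univ.filter (ℓ < ·), d n ≤ d ℓ

theorem weightedBitSum_le {m : ℕ} (d : Fin m → ℕ) (i : ℕ) :
    weightedBitSum d i ≤ ∑ n, d n :=
  sum_le_sum fun _ _ => mul_le_of_le_one_right' (Nat.le_of_lt_succ (Nat.mod_lt _ two_pos))

theorem weightedBitSum_succ {m : ℕ} (d : Fin (m + 1) → ℕ) (i : ℕ) :
    weightedBitSum d i = d 0 * (i / 2 ^ m % 2) + weightedBitSum (Fin.tail d) i := by
  simp only [weightedBitSum, Fin.sum_univ_succ, Fin.val_zero, Fin.val_succ, Fin.tail,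
    Nat.add_sub_cancel, Nat.sub_zero, Nat.sub_sub, Nat.add_comm 1]

theorem NonSquashing.tail {m : ℕ} {d : Fin (m + 1) → ℕ} (hd : NonSquashing d) :
    NonSquashing (Fin.tail d) := by
  intro ℓ
  simpa [sum_filter, Fin.sum_univ_succ, Fin.tail] using hd ℓ.succ

theorem NonSquashing.sum_tail_le {m : ℕ} {d : Fin (m + 1) → ℕ} (hd : NonSquashing d) :
    ∑ n, Fin.tail d n ≤ d 0 := by
  simpa [sum_filter, Fin.sum_univ_succ, Fin.tail, Fin.succ_pos] using hd 0

theorem nonSquashing_iff {m : ℕ} (d : Fin m → ℕ) :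
    NonSquashing d ↔
      ∀ ℓ : Fin m, (ℓ : ℕ) + 1 < m → ∑ n ∈ univ.filter (ℓ < ·), d n ≤ d ℓ := by
  refine ⟨fun hd ℓ _ => hd ℓ, fun hd ℓ => ?_⟩
  by_cases hℓ : (ℓ : ℕ) + 1 < m
  · exact hd ℓ hℓ
  · have : univ.filter (ℓ < ·) = ∅ :=
      filter_eq_empty_iff.mpr fun n _ h => hℓ (by have := n.isLt; omega)
    simp [this]

theorem NonSquashing.strictMonoOn_block {m : ℕ} {d : Fin m → ℕ} (hd : NonSquashing d) (q : ℕ) :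
    StrictMonoOn (fun i => i + weightedBitSum d i) {i | i / 2 ^ m = q} := by
  induction m generalizing q with
  | zero =>
    intro i hi j hj hij
    simp_all
  | succ m ih =>
    intro i hi j hj hij
    simp only [Set.mem_ofPred_eq] at hi hj
    have leading_digit (k : ℕ) : k / 2 ^ m = 2 * (k / 2 ^ (m + 1)) + k / 2 ^ m % 2 := by
      rw [pow_succ, ← Nat.div_div_eq_div_mul]
      exact (Nat.div_add_mod _ 2).symm
    have hi' := leading_digit i
    have hj' := leading_digit j
    have hle : i / 2 ^ m ≤ j / 2 ^ m := Nat.div_le_div_right hij.le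
    have hbi := Nat.mod_lt (i / 2 ^ m) two_pos
    have hbj := Nat.mod_lt (j / 2 ^ m) two_pos
    simp only [weightedBitSum_succ]
    by_cases hbit : i / 2 ^ m % 2 = j / 2 ^ m % 2
    · have tail_lt : i + weightedBitSum (Fin.tail d) i < j + weightedBitSum (Fin.tail d) j :=
        ih hd.tail (i / 2 ^ m) rfl (show j / 2 ^ m = i / 2 ^ m by omega) hij
      rw [hbit]
      omega
    · obtain ⟨hi0, hj1⟩ : i / 2 ^ m % 2 = 0 ∧ j / 2 ^ m % 2 = 1 := by omega
      have tail_le := (weightedBitSum_le (Fin.tail d) i).trans hd.sum_tail_le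
      rw [hi0, hj1]
      omega

theorem stmt17_general (m : ℕ) (d : Fin m → ℕ)
    (hns : ∀ ℓ : Fin m, (ℓ : ℕ) + 1 < m →
      ∑ i ∈ Finset.univ.filter (fun i => ℓ < i), d i ≤ d ℓ) :
    StrictMonoOn
      (fun i : ℕ => i + ∑ n : Fin m, d n * (i / 2 ^ (m - 1 - (n : ℕ)) % 2))
      (Set.Iio (2 ^ m)) :=
  (((nonSquashing_iff d).mpr hns).strictMonoOn_block 0).mono fun _ hi => Nat.div_eq_of_lt hi

theorem stmt17 (m : ℕ) (hm : 1 ≤ m) (d : Fin m → ℕ)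
    (hns : ∀ ℓ : Fin m, (ℓ : ℕ) + 1 < m →
      ∑ i ∈ Finset.univ.filter (fun i => ℓ < i), d i ≤ d ℓ) :
    StrictMonoOn
      (fun i : ℕ => i + ∑ n : Fin m, d n * (i / 2 ^ (m - 1 - (n : ℕ)) % 2))
      (Set.Iio (2 ^ m)) :=
  stmt17_general m d hns
end
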